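/- arXiv:2311.11428 — 3 statements merged into one kernel-verified Lean document; each statement's English description precedes it below -/
import Mathlib

section
/- Let f : ℝ^{d₁} × ℝ^{d₂} → ℝ be a C² function such that the operator norm of the mixed Hessian ∇ₓ∇_y f(x,y) is bounded by M for all x, y. Then for all probability measures μ, μ' on ℝ^{d₁} and ν, ν' on ℝ^{d₂} with finite second moments, |∬ f(x,y) (μ−μ')(dx) (ν−ν')(dy)| ≤ M · W₂(μ,μ') · W₂(ν,ν'), where W₂ denotes the 2-Wasserstein distance. -/
open MeasureTheory

/-- The 2-Wasserstein distance, defined through couplings. -/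
noncomputable def W2 {E : Type*} [MeasurableSpace E] [PseudoMetricSpace E]
    (μ μ' : Measure E) : ℝ :=
  sInf {r | ∃ π : Measure (E × E), π.fst = μ ∧ π.snd = μ' ∧
    r = (∫ p, dist p.1 p.2 ^ 2 ∂π) ^ ((1 : ℝ) / 2)}

private lemma pointwise_bound {E₁ E₂ : Type*} [NormedAddCommGroup E₁] [NormedSpace ℝ E₁]
    [NormedAddCommGroup E₂] [NormedSpace ℝ E₂]
    (f : E₁ × E₂ → ℝ) (M : ℝ) (hM0 : 0 ≤ M) (hf : ContDiff ℝ 2 f)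
    (hM : ∀ x y v w, |fderiv ℝ (fun x' => fderiv ℝ (fun y' => f (x', y')) y w) x v| ≤ M * ‖v‖ * ‖w‖)
    (x x' : E₁) (y y' : E₂) :
    |f (x, y) - f (x', y) - f (x, y') + f (x', y')| ≤ M * ‖x - x'‖ * ‖y - y'‖ := by
  have hdiff : Differentiable ℝ f := hf.differentiable (by norm_num)
  have hy : ∀ a : E₁, Differentiable ℝ (fun b => f (a, b)) := fun a =>
    hdiff.comp ((differentiable_const a).prodMk differentiable_id)
  -- derivative of the fderiv-in-y function in the x variable
  have hfd1 : Differentiable ℝ (fderiv ℝ f) := by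
    have : ContDiff ℝ 1 (fderiv ℝ f) := hf.fderiv_right (by norm_num)
    exact this.differentiable (by norm_num)
  have hkeq : ∀ (a : E₁) (b : E₂) (w : E₂),
      fderiv ℝ (fun y' => f (a, y')) b w = (fderiv ℝ f (a, b)) (0, w) := by
    intro a b w
    have h1 : HasFDerivAt (fun y' => f (a, y'))
        ((fderiv ℝ f (a, b)).comp (ContinuousLinearMap.inr ℝ E₁ E₂)) b :=
      (hdiff (a, b)).hasFDerivAt.comp b (hasFDerivAt_prodMk_right a b)
    rw [h1.fderiv]; rfl
  have hkdiff : ∀ (b : E₂) (w : E₂),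
      Differentiable ℝ (fun a => fderiv ℝ (fun y' => f (a, y')) b w) := by
    intro b w
    have h2 : Differentiable ℝ (fun a : E₁ => (fderiv ℝ f (a, b)) (0, w)) :=
      (hfd1.comp (differentiable_id.prodMk (differentiable_const b))).clm_apply
        (differentiable_const _)
    have h3 : (fun a : E₁ => fderiv ℝ (fun y' => f (a, y')) b w)
        = fun a : E₁ => (fderiv ℝ f (a, b)) (0, w) := funext fun a => hkeq a b w
    rw [h3]; exact h2
  -- inner MVT step
  have inner : ∀ (b : E₂) (w : E₂) (a a' : E₁),
      |fderiv ℝ (fun y' => f (a, y')) b w - fderiv ℝ (fun y' => f (a', y')) b w|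
        ≤ M * ‖w‖ * ‖a - a'‖ := by
    intro b w a a'
    have hb : ∀ z ∈ (Set.univ : Set E₁),
        DifferentiableAt ℝ (fun a => fderiv ℝ (fun y' => f (a, y')) b w) z :=
      fun z _ => (hkdiff b w z)
    have hbound : ∀ z ∈ (Set.univ : Set E₁),
        ‖fderiv ℝ (fun a => fderiv ℝ (fun y' => f (a, y')) b w) z‖ ≤ M * ‖w‖ := by
      intro z _
      refine ContinuousLinearMap.opNorm_le_bound _ (mul_nonneg hM0 (norm_nonneg w)) fun v => ?_
      have := hM z b v w
      rw [Real.norm_eq_abs]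
      calc |fderiv ℝ (fun a => fderiv ℝ (fun y' => f (a, y')) b w) z v| ≤ M * ‖v‖ * ‖w‖ := hM z b v w
        _ = M * ‖w‖ * ‖v‖ := by ring
    have := Convex.norm_image_sub_le_of_norm_fderiv_le hb hbound (convex_univ) (Set.mem_univ a') (Set.mem_univ a)
    simpa [Real.norm_eq_abs] using this
  -- outer MVT step
  set L : E₂ → ℝ := fun b => f (x, b) - f (x', b) with hL
  have hLdiff : Differentiable ℝ L := (hy x).sub (hy x')
  have hLbound : ∀ b ∈ (Set.univ : Set E₂), ‖fderiv ℝ L b‖ ≤ M * ‖x - x'‖ := by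
    intro b _
    refine ContinuousLinearMap.opNorm_le_bound _ (mul_nonneg hM0 (norm_nonneg _)) fun w => ?_
    have happ : fderiv ℝ L b w
        = fderiv ℝ (fun y' => f (x, y')) b w - fderiv ℝ (fun y' => f (x', y')) b w := by
      rw [hL, fderiv_fun_sub ((hy x).differentiableAt) ((hy x').differentiableAt)]
      rfl
    rw [Real.norm_eq_abs, happ]
    calc |fderiv ℝ (fun y' => f (x, y')) b w - fderiv ℝ (fun y' => f (x', y')) b w|
        ≤ M * ‖w‖ * ‖x - x'‖ := inner b w x x'
      _ = M * ‖x - x'‖ * ‖w‖ := by ring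
  have := Convex.norm_image_sub_le_of_norm_fderiv_le (fun z _ => hLdiff z)
    hLbound (convex_univ) (Set.mem_univ y') (Set.mem_univ y)
  have heq : f (x, y) - f (x', y) - f (x, y') + f (x', y') = L y - L y' := by
    simp only [hL]; ring
  rw [heq]
  simpa [Real.norm_eq_abs] using this


private lemma integral_le_rpow_half {α : Type*} [MeasurableSpace α] (π : Measure α)
    [IsProbabilityMeasure π] {g : α → ℝ} (hg0 : ∀ a, 0 ≤ g a)
    (hg : Integrable g π) (hg2 : Integrable (fun a => g a ^ 2) π) :
    ∫ a, g a ∂π ≤ (∫ a, g a ^ 2 ∂π) ^ ((1 : ℝ) / 2) := by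
  set c := ∫ a, g a ∂π with hc
  have hc0 : 0 ≤ c := integral_nonneg hg0
  have key : c ^ 2 ≤ ∫ a, g a ^ 2 ∂π := by
    have h0 : 0 ≤ ∫ a, (g a - c) ^ 2 ∂π := integral_nonneg fun a => sq_nonneg _
    have hexp : ∀ a, (g a - c) ^ 2 = g a ^ 2 - (2 * c) * g a + c ^ 2 := fun a => by ring
    have hint : ∫ a, (g a - c) ^ 2 ∂π = (∫ a, g a ^ 2 ∂π) - 2 * c * c + c ^ 2 := by
      simp_rw [hexp]
      have i1 : Integrable (fun a => g a ^ 2 - 2 * c * g a) π := by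
        exact hg2.sub (hg.const_mul (2 * c))
      have i2 : Integrable (fun a => 2 * c * g a) π := hg.const_mul (2 * c)
      rw [integral_add i1 (integrable_const _), integral_sub hg2 i2,
        MeasureTheory.integral_const_mul, integral_const]
      simp [← hc]
    nlinarith [h0, hint]
  rw [← Real.sqrt_eq_rpow]
  exact (Real.le_sqrt hc0 (le_trans (sq_nonneg c) key)).mpr key

private lemma prob_measure_subsingleton_eq {E : Type*} [MeasurableSpace E] [Subsingleton E]
    (μ μ' : Measure E) [IsProbabilityMeasure μ] [IsProbabilityMeasure μ'] : μ = μ' := by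
  ext s hs
  rcases Set.eq_empty_or_nonempty s with h | h
  · simp [h]
  · have hu : s = Set.univ := by
      obtain ⟨a, ha⟩ := h
      apply Set.eq_univ_of_forall
      intro b; rwa [Subsingleton.elim b a]
    simp [hu]

private lemma W2_nonneg_mem {E : Type*} [MeasurableSpace E] [PseudoMetricSpace E]
    {μ μ' : Measure E} {r : ℝ}
    (hr : ∃ π : Measure (E × E), π.fst = μ ∧ π.snd = μ' ∧
      r = (∫ p, dist p.1 p.2 ^ 2 ∂π) ^ ((1 : ℝ) / 2)) : 0 ≤ r := by
  obtain ⟨π, -, -, rfl⟩ := hr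
  exact Real.rpow_nonneg (integral_nonneg fun p => sq_nonneg _) _

private lemma le_mul_sInf {S : Set ℝ} (hne : S.Nonempty) (h0 : ∀ r ∈ S, 0 ≤ r)
    {c I : ℝ} (hc : 0 ≤ c) (h : ∀ r ∈ S, I ≤ c * r) : I ≤ c * sInf S := by
  have hbdd : BddBelow S := ⟨0, h0⟩
  rcases eq_or_lt_of_le hc with rfl | hc'
  · obtain ⟨r, hr⟩ := hne
    have := h r hr
    simpa using this.trans_eq (by ring)
  · have h1 : I / c ≤ sInf S := le_csInf hne fun r hr => (div_le_iff₀' hc').mpr (h r hr)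
    calc I = c * (I / c) := by field_simp
      _ ≤ c * sInf S := by nlinarith
private lemma W2_self {E : Type*} [MeasurableSpace E] [PseudoMetricSpace E]
    [OpensMeasurableSpace E] [SecondCountableTopology E]
    (μ : Measure E) [IsProbabilityMeasure μ] : W2 μ μ = 0 := by
  have hmem : (0 : ℝ) ∈ {r | ∃ π : Measure (E × E), π.fst = μ ∧ π.snd = μ ∧
      r = (∫ p, dist p.1 p.2 ^ 2 ∂π) ^ ((1 : ℝ) / 2)} := by
    refine ⟨μ.map (fun a => (a, a)), ?_, ?_, ?_⟩
    · rw [Measure.fst_map_prodMk (X := fun a : E => a) (Y := fun a : E => a) measurable_id]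
      exact Measure.map_id'
    · rw [Measure.snd_map_prodMk (X := fun a : E => a) (Y := fun a : E => a) measurable_id]
      exact Measure.map_id'
    · rw [integral_map (show Measurable fun a : E => (a, a) from measurable_id.prodMk measurable_id).aemeasurable
        (show AEStronglyMeasurable (fun p : E × E => dist p.1 p.2 ^ 2) _ from
          ((continuous_fst.dist continuous_snd).pow 2).aestronglyMeasurable)]
      simp only [dist_self]
      norm_num
  have hbdd : ∀ r ∈ {r | ∃ π : Measure (E × E), π.fst = μ ∧ π.snd = μ ∧
      r = (∫ p, dist p.1 p.2 ^ 2 ∂π) ^ ((1 : ℝ) / 2)}, (0:ℝ) ≤ r := by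
    rintro r ⟨π, -, -, rfl⟩
    exact Real.rpow_nonneg (integral_nonneg fun p => sq_nonneg _) _
  refine le_antisymm (csInf_le ⟨0, hbdd⟩ hmem) (le_csInf ⟨0, hmem⟩ hbdd)
section CB
variable {d₁ d₂ : ℕ}
local notation "E₁" => EuclideanSpace ℝ (Fin d₁)
local notation "E₂" => EuclideanSpace ℝ (Fin d₂)

-- second moment integrability transfers along marginals
private lemma marg_int {α E : Type*} [MeasurableSpace α]
    [MeasurableSpace E] {π : Measure α} {μ : Measure E} {T : α → E}
    (hT : Measurable T) (hmap : π.map T = μ) {g : E → ℝ}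
    (hgm : StronglyMeasurable g) (hg : Integrable g μ) :
    Integrable (fun a => g (T a)) π := by
  have := (integrable_map_measure (hmap ▸ hgm.aestronglyMeasurable) hT.aemeasurable).mp
    (hmap ▸ hg)
  exact this

private lemma coupling_bound
    (f : E₁ × E₂ → ℝ) (M : ℝ) (hM0 : 0 ≤ M) (hf : ContDiff ℝ 2 f)
    (hM : ∀ (x : E₁) (y : E₂) (v w),
      |fderiv ℝ (fun x' => fderiv ℝ (fun y' => f (x', y')) y w) x v| ≤ M * ‖v‖ * ‖w‖)
    (hptw : ∀ (x x' : E₁) (y y' : E₂),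
      |f (x, y) - f (x', y) - f (x, y') + f (x', y')| ≤ M * ‖x - x'‖ * ‖y - y'‖)
    (μ μ' : Measure E₁) (ν ν' : Measure E₂)
    [IsProbabilityMeasure μ] [IsProbabilityMeasure μ']
    [IsProbabilityMeasure ν] [IsProbabilityMeasure ν']
    (hμ : Integrable (fun x : E₁ => ‖x‖ ^ 2) μ)
    (hμ' : Integrable (fun x : E₁ => ‖x‖ ^ 2) μ')
    (hν : Integrable (fun y : E₂ => ‖y‖ ^ 2) ν)
    (hν' : Integrable (fun y : E₂ => ‖y‖ ^ 2) ν')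
    (h1 : Integrable f (μ.prod ν)) (h2 : Integrable f (μ'.prod ν))
    (h3 : Integrable f (μ.prod ν')) (h4 : Integrable f (μ'.prod ν'))
    (π : Measure (E₁ × E₁)) (π' : Measure (E₂ × E₂))
    (hπ1 : π.fst = μ) (hπ2 : π.snd = μ') (hπ'1 : π'.fst = ν) (hπ'2 : π'.snd = ν')
    (CS : ∀ {α : Type} [MeasurableSpace α] (ρ : Measure α) [IsProbabilityMeasure ρ]
      {g : α → ℝ}, (∀ a, 0 ≤ g a) → Integrable g ρ → Integrable (fun a => g a ^ 2) ρ →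
      ∫ a, g a ∂ρ ≤ (∫ a, g a ^ 2 ∂ρ) ^ ((1 : ℝ) / 2)) :
    |(∫ p, f p ∂(μ.prod ν)) - (∫ p, f p ∂(μ'.prod ν))
      - (∫ p, f p ∂(μ.prod ν')) + (∫ p, f p ∂(μ'.prod ν'))|
      ≤ M * (∫ p, dist p.1 p.2 ^ 2 ∂π) ^ ((1 : ℝ) / 2)
          * (∫ p, dist p.1 p.2 ^ 2 ∂π') ^ ((1 : ℝ) / 2) := by
  haveI : IsProbabilityMeasure π := ⟨by rw [← Measure.fst_univ, hπ1]; exact measure_univ⟩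
  haveI : IsProbabilityMeasure π' := ⟨by rw [← Measure.fst_univ, hπ'1]; exact measure_univ⟩
  have hπf : π.map Prod.fst = μ := hπ1
  have hπs : π.map Prod.snd = μ' := hπ2
  have hπ'f : π'.map Prod.fst = ν := hπ'1
  have hπ's : π'.map Prod.snd = ν' := hπ'2
  set PP : Measure ((E₁ × E₁) × (E₂ × E₂)) := π.prod π' with hPP
  have hfc : Continuous f := hf.continuous
  -- the four pushforwards
  have hmap : ∀ (u : E₁ × E₁ → E₁) (v : E₂ × E₂ → E₂), Measurable u → Measurable v →
      PP.map (Prod.map u v) = (π.map u).prod (π'.map v) := fun u v hu hv =>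
    (Measure.map_prod_map π π' hu hv).symm
  have hT : ∀ (u : E₁ × E₁ → E₁) (v : E₂ × E₂ → E₂), Measurable u → Measurable v →
      Measurable (Prod.map u v) := fun u v hu hv => hu.prodMap hv
  -- generic transfer of integrals and integrability
  have htrans : ∀ (u : E₁ × E₁ → E₁) (v : E₂ × E₂ → E₂), Measurable u → Measurable v →
      ∀ (ρ : Measure (E₁ × E₂)), (π.map u).prod (π'.map v) = ρ → Integrable f ρ →
      (∫ p, f p ∂ρ = ∫ q, f (u q.1, v q.2) ∂PP) ∧ Integrable (fun q => f (u q.1, v q.2)) PP := by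
    intro u v hu hv ρ hρ hint
    have hm : PP.map (Prod.map u v) = ρ := (hmap u v hu hv).trans hρ
    constructor
    · rw [← hm, integral_map (hT u v hu hv).aemeasurable (hm ▸ hfc.aestronglyMeasurable)]
      rfl
    · have := (integrable_map_measure (hm ▸ hfc.aestronglyMeasurable)
        (hT u v hu hv).aemeasurable).mp (hm ▸ hint)
      exact this
  obtain ⟨e11, i11⟩ := htrans Prod.fst Prod.fst measurable_fst measurable_fst (μ.prod ν)
    (by rw [hπf, hπ'f]) h1
  obtain ⟨e21, i21⟩ := htrans Prod.snd Prod.fst measurable_snd measurable_fst (μ'.prod ν)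
    (by rw [hπs, hπ'f]) h2
  obtain ⟨e12, i12⟩ := htrans Prod.fst Prod.snd measurable_fst measurable_snd (μ.prod ν')
    (by rw [hπf, hπ's]) h3
  obtain ⟨e22, i22⟩ := htrans Prod.snd Prod.snd measurable_snd measurable_snd (μ'.prod ν')
    (by rw [hπs, hπ's]) h4
  set g : (E₁ × E₁) × (E₂ × E₂) → ℝ := fun q =>
    f (q.1.1, q.2.1) - f (q.1.2, q.2.1) - f (q.1.1, q.2.2) + f (q.1.2, q.2.2) with hg
  have hgint : Integrable g PP := by
    exact ((i11.sub i21).sub i12).add i22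
  have hsum : (∫ p, f p ∂(μ.prod ν)) - (∫ p, f p ∂(μ'.prod ν))
      - (∫ p, f p ∂(μ.prod ν')) + (∫ p, f p ∂(μ'.prod ν')) = ∫ q, g q ∂PP := by
    rw [e11, e21, e12, e22, hg]
    rw [integral_add (by exact (i11.sub i21).sub i12) i22,
      integral_sub (by exact i11.sub i21) i12, integral_sub i11 i21]
  -- second moments of coordinates w.r.t. π
  have j1 : Integrable (fun p : E₁ × E₁ => ‖p.1‖ ^ 2) π :=
    marg_int measurable_fst hπf (continuous_norm.pow 2).stronglyMeasurable hμ
  have j2 : Integrable (fun p : E₁ × E₁ => ‖p.2‖ ^ 2) π :=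
    marg_int measurable_snd hπs (continuous_norm.pow 2).stronglyMeasurable hμ'
  have j3 : Integrable (fun p : E₂ × E₂ => ‖p.1‖ ^ 2) π' :=
    marg_int measurable_fst hπ'f (continuous_norm.pow 2).stronglyMeasurable hν
  have j4 : Integrable (fun p : E₂ × E₂ => ‖p.2‖ ^ 2) π' :=
    marg_int measurable_snd hπ's (continuous_norm.pow 2).stronglyMeasurable hν'
  -- distance square integrable
  have k1 : Integrable (fun p : E₁ × E₁ => ‖p.1 - p.2‖ ^ 2) π := by
    refine Integrable.mono (g := fun p : E₁ × E₁ => 2 * ‖p.1‖ ^ 2 + 2 * ‖p.2‖ ^ 2)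
      (by exact (j1.const_mul 2).add (j2.const_mul 2))
      (((continuous_fst.sub continuous_snd).norm.pow 2).aestronglyMeasurable)
      (ae_of_all _ fun p => ?_)
    rw [Real.norm_eq_abs, Real.norm_eq_abs, abs_of_nonneg (by positivity),
      abs_of_nonneg (by positivity)]
    show ‖p.1 - p.2‖ ^ 2 ≤ 2 * ‖p.1‖ ^ 2 + 2 * ‖p.2‖ ^ 2
    have h := norm_sub_le p.1 p.2
    have h2 : ‖p.1 - p.2‖ ^ 2 ≤ (‖p.1‖ + ‖p.2‖) ^ 2 := pow_le_pow_left₀ (norm_nonneg _) h 2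
    nlinarith [h2, sq_nonneg (‖p.1‖ - ‖p.2‖)]
  have k2 : Integrable (fun p : E₂ × E₂ => ‖p.1 - p.2‖ ^ 2) π' := by
    refine Integrable.mono (g := fun p : E₂ × E₂ => 2 * ‖p.1‖ ^ 2 + 2 * ‖p.2‖ ^ 2)
      (by exact (j3.const_mul 2).add (j4.const_mul 2))
      (((continuous_fst.sub continuous_snd).norm.pow 2).aestronglyMeasurable)
      (ae_of_all _ fun p => ?_)
    rw [Real.norm_eq_abs, Real.norm_eq_abs, abs_of_nonneg (by positivity),
      abs_of_nonneg (by positivity)]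
    show ‖p.1 - p.2‖ ^ 2 ≤ 2 * ‖p.1‖ ^ 2 + 2 * ‖p.2‖ ^ 2
    have h := norm_sub_le p.1 p.2
    have h2 : ‖p.1 - p.2‖ ^ 2 ≤ (‖p.1‖ + ‖p.2‖) ^ 2 := pow_le_pow_left₀ (norm_nonneg _) h 2
    nlinarith [h2, sq_nonneg (‖p.1‖ - ‖p.2‖)]
  -- distance integrable
  have l1 : Integrable (fun p : E₁ × E₁ => ‖p.1 - p.2‖) π := by
    refine Integrable.mono (g := fun p : E₁ × E₁ => 1 + ‖p.1 - p.2‖ ^ 2)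
      (by exact (integrable_const 1).add k1)
      ((continuous_fst.sub continuous_snd).norm.aestronglyMeasurable)
      (ae_of_all _ fun p => ?_)
    rw [Real.norm_eq_abs, Real.norm_eq_abs, abs_of_nonneg (norm_nonneg _),
      abs_of_nonneg (by positivity)]
    show ‖p.1 - p.2‖ ≤ 1 + ‖p.1 - p.2‖ ^ 2
    nlinarith [norm_nonneg (p.1 - p.2)]
  have l2 : Integrable (fun p : E₂ × E₂ => ‖p.1 - p.2‖) π' := by
    refine Integrable.mono (g := fun p : E₂ × E₂ => 1 + ‖p.1 - p.2‖ ^ 2)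
      (by exact (integrable_const 1).add k2)
      ((continuous_fst.sub continuous_snd).norm.aestronglyMeasurable)
      (ae_of_all _ fun p => ?_)
    rw [Real.norm_eq_abs, Real.norm_eq_abs, abs_of_nonneg (norm_nonneg _),
      abs_of_nonneg (by positivity)]
    show ‖p.1 - p.2‖ ≤ 1 + ‖p.1 - p.2‖ ^ 2
    nlinarith [norm_nonneg (p.1 - p.2)]
  -- the product bound is integrable
  have hBint : Integrable (fun q : (E₁ × E₁) × (E₂ × E₂) =>
      (M * ‖q.1.1 - q.1.2‖) * ‖q.2.1 - q.2.2‖) PP := by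
    exact (l1.const_mul M).mul_prod l2
  -- Cauchy-Schwarz pieces
  have cs1 : ∫ p, ‖p.1 - p.2‖ ∂π ≤ (∫ p, dist p.1 p.2 ^ 2 ∂π) ^ ((1 : ℝ) / 2) := by
    have := CS π (g := fun p : E₁ × E₁ => ‖p.1 - p.2‖) (fun p => norm_nonneg _) l1 k1
    simpa [dist_eq_norm] using this
  have cs2 : ∫ p, ‖p.1 - p.2‖ ∂π' ≤ (∫ p, dist p.1 p.2 ^ 2 ∂π') ^ ((1 : ℝ) / 2) := by
    have := CS π' (g := fun p : E₂ × E₂ => ‖p.1 - p.2‖) (fun p => norm_nonneg _) l2 k2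
    simpa [dist_eq_norm] using this
  have hA0 : 0 ≤ ∫ p, ‖p.1 - p.2‖ ∂π := integral_nonneg fun p => norm_nonneg _
  have hB0 : 0 ≤ ∫ p, ‖p.1 - p.2‖ ∂π' := integral_nonneg fun p => norm_nonneg _
  have hr2 : 0 ≤ (∫ p, dist p.1 p.2 ^ 2 ∂π') ^ ((1 : ℝ) / 2) :=
    Real.rpow_nonneg (integral_nonneg fun p => sq_nonneg _) _
  calc |(∫ p, f p ∂(μ.prod ν)) - (∫ p, f p ∂(μ'.prod ν))
      - (∫ p, f p ∂(μ.prod ν')) + (∫ p, f p ∂(μ'.prod ν'))|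
      = |∫ q, g q ∂PP| := by rw [hsum]
    _ ≤ ∫ q, |g q| ∂PP := by
        simpa [Real.norm_eq_abs] using norm_integral_le_integral_norm (μ := PP) g
    _ ≤ ∫ q, (M * ‖q.1.1 - q.1.2‖) * ‖q.2.1 - q.2.2‖ ∂PP := by
        refine integral_mono hgint.abs hBint fun q => ?_
        have := hptw q.1.1 q.1.2 q.2.1 q.2.2
        calc |g q| ≤ M * ‖q.1.1 - q.1.2‖ * ‖q.2.1 - q.2.2‖ := this
          _ = (M * ‖q.1.1 - q.1.2‖) * ‖q.2.1 - q.2.2‖ := by ring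
    _ = (∫ p, M * ‖p.1 - p.2‖ ∂π) * (∫ p, ‖p.1 - p.2‖ ∂π') :=
        integral_prod_mul (fun p : E₁ × E₁ => M * ‖p.1 - p.2‖) (fun p : E₂ × E₂ => ‖p.1 - p.2‖)
    _ = M * (∫ p, ‖p.1 - p.2‖ ∂π) * (∫ p, ‖p.1 - p.2‖ ∂π') := by
        rw [integral_const_mul]
    _ ≤ M * (∫ p, dist p.1 p.2 ^ 2 ∂π) ^ ((1 : ℝ) / 2)
          * (∫ p, dist p.1 p.2 ^ 2 ∂π') ^ ((1 : ℝ) / 2) := by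
        have h1' : M * (∫ p, ‖p.1 - p.2‖ ∂π) ≤ M * (∫ p, dist p.1 p.2 ^ 2 ∂π) ^ ((1 : ℝ) / 2) :=
          mul_le_mul_of_nonneg_left cs1 hM0
        have h2' : 0 ≤ M * (∫ p, ‖p.1 - p.2‖ ∂π) := mul_nonneg hM0 hA0
        exact mul_le_mul h1' cs2 hB0 (le_trans h2' h1')
end CB

/-- If the mixed Hessian of a `C²` function `f` has operator norm at most `M`, then
`|∬ f d(μ-μ')d(ν-ν')| ≤ M W₂(μ,μ') W₂(ν,ν')`. -/
theorem wasserstein_duality_two_variables {d₁ d₂ : ℕ}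
    (f : EuclideanSpace ℝ (Fin d₁) × EuclideanSpace ℝ (Fin d₂) → ℝ) (M : ℝ)
    (hf : ContDiff ℝ 2 f)
    (hM : ∀ (x : EuclideanSpace ℝ (Fin d₁)) (y : EuclideanSpace ℝ (Fin d₂)) (v w),
      |fderiv ℝ (fun x' => fderiv ℝ (fun y' => f (x', y')) y w) x v| ≤ M * ‖v‖ * ‖w‖)
    (μ μ' : Measure (EuclideanSpace ℝ (Fin d₁)))
    (ν ν' : Measure (EuclideanSpace ℝ (Fin d₂)))
    [IsProbabilityMeasure μ] [IsProbabilityMeasure μ']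
    [IsProbabilityMeasure ν] [IsProbabilityMeasure ν']
    (hμ : Integrable (fun x : EuclideanSpace ℝ (Fin d₁) => ‖x‖ ^ 2) μ)
    (hμ' : Integrable (fun x : EuclideanSpace ℝ (Fin d₁) => ‖x‖ ^ 2) μ')
    (hν : Integrable (fun y : EuclideanSpace ℝ (Fin d₂) => ‖y‖ ^ 2) ν)
    (hν' : Integrable (fun y : EuclideanSpace ℝ (Fin d₂) => ‖y‖ ^ 2) ν')
    (h1 : Integrable f (μ.prod ν)) (h2 : Integrable f (μ'.prod ν))
    (h3 : Integrable f (μ.prod ν')) (h4 : Integrable f (μ'.prod ν')) :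
    |(∫ p, f p ∂(μ.prod ν)) - (∫ p, f p ∂(μ'.prod ν))
      - (∫ p, f p ∂(μ.prod ν')) + (∫ p, f p ∂(μ'.prod ν'))|
      ≤ M * W2 μ μ' * W2 ν ν' := by
  rcases Nat.eq_zero_or_pos d₁ with hd1 | hd1
  · haveI : Subsingleton (EuclideanSpace ℝ (Fin d₁)) := by
      subst hd1; exact ⟨fun a b => PiLp.ext fun i => i.elim0⟩
    have hμe : μ = μ' := prob_measure_subsingleton_eq μ μ'
    rw [hμe, W2_self μ']
    have hz : (∫ p, f p ∂(μ'.prod ν)) - (∫ p, f p ∂(μ'.prod ν))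
        - (∫ p, f p ∂(μ'.prod ν')) + (∫ p, f p ∂(μ'.prod ν')) = 0 := by ring
    rw [hz, abs_zero, mul_zero, zero_mul]
  rcases Nat.eq_zero_or_pos d₂ with hd2 | hd2
  · haveI : Subsingleton (EuclideanSpace ℝ (Fin d₂)) := by
      subst hd2; exact ⟨fun a b => PiLp.ext fun i => i.elim0⟩
    have hνe : ν = ν' := prob_measure_subsingleton_eq ν ν'
    rw [hνe, W2_self ν']
    have hz : (∫ p, f p ∂(μ.prod ν')) - (∫ p, f p ∂(μ'.prod ν'))
        - (∫ p, f p ∂(μ.prod ν')) + (∫ p, f p ∂(μ'.prod ν')) = 0 := by ring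
    rw [hz, abs_zero, mul_zero]
  -- main case
  have hM0 : 0 ≤ M := by
    have h := hM 0 0 (EuclideanSpace.single (⟨0, hd1⟩ : Fin d₁) (1 : ℝ))
      (EuclideanSpace.single (⟨0, hd2⟩ : Fin d₂) (1 : ℝ))
    rw [EuclideanSpace.norm_single, EuclideanSpace.norm_single, norm_one, mul_one, mul_one] at h
    exact le_trans (abs_nonneg _) h
  have hptw := pointwise_bound f M hM0 hf hM
  have hS₁ne : Set.Nonempty {r | ∃ π : Measure (EuclideanSpace ℝ (Fin d₁) × EuclideanSpace ℝ (Fin d₁)),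
      π.fst = μ ∧ π.snd = μ' ∧ r = (∫ p, dist p.1 p.2 ^ 2 ∂π) ^ ((1 : ℝ) / 2)} :=
    ⟨_, μ.prod μ', Measure.fst_prod, Measure.snd_prod, rfl⟩
  have hS₂ne : Set.Nonempty {r | ∃ π : Measure (EuclideanSpace ℝ (Fin d₂) × EuclideanSpace ℝ (Fin d₂)),
      π.fst = ν ∧ π.snd = ν' ∧ r = (∫ p, dist p.1 p.2 ^ 2 ∂π) ^ ((1 : ℝ) / 2)} :=
    ⟨_, ν.prod ν', Measure.fst_prod, Measure.snd_prod, rfl⟩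
  have hS₁0 : ∀ r ∈ {r | ∃ π : Measure (EuclideanSpace ℝ (Fin d₁) × EuclideanSpace ℝ (Fin d₁)),
      π.fst = μ ∧ π.snd = μ' ∧ r = (∫ p, dist p.1 p.2 ^ 2 ∂π) ^ ((1 : ℝ) / 2)}, 0 ≤ r :=
    fun _ hr => W2_nonneg_mem hr
  have hS₂0 : ∀ r ∈ {r | ∃ π : Measure (EuclideanSpace ℝ (Fin d₂) × EuclideanSpace ℝ (Fin d₂)),
      π.fst = ν ∧ π.snd = ν' ∧ r = (∫ p, dist p.1 p.2 ^ 2 ∂π) ^ ((1 : ℝ) / 2)}, 0 ≤ r :=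
    fun _ hr => W2_nonneg_mem hr
  unfold W2
  rw [mul_right_comm]
  apply le_mul_sInf hS₁ne hS₁0 (mul_nonneg hM0 (Real.sInf_nonneg hS₂0))
  rintro r ⟨π, hπ1, hπ2, rfl⟩
  rw [mul_right_comm]
  apply le_mul_sInf hS₂ne hS₂0
    (mul_nonneg hM0 (Real.rpow_nonneg (integral_nonneg fun p => sq_nonneg _) _))
  rintro r' ⟨π', hπ'1, hπ'2, rfl⟩
  have hb := coupling_bound f M hM0 hf hM hptw μ μ' ν ν' hμ hμ' hν hν' h1 h2 h3 h4
    π π' hπ1 hπ2 hπ'1 hπ'2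
    (fun {α} _ ρ _ {g} h0 hi1 hi2 => integral_le_rpow_half ρ h0 hi1 hi2)
  calc |(∫ p, f p ∂(μ.prod ν)) - (∫ p, f p ∂(μ'.prod ν))
      - (∫ p, f p ∂(μ.prod ν')) + (∫ p, f p ∂(μ'.prod ν'))|
      ≤ M * (∫ p, dist p.1 p.2 ^ 2 ∂π) ^ ((1 : ℝ) / 2)
          * (∫ p, dist p.1 p.2 ^ 2 ∂π') ^ ((1 : ℝ) / 2) := hb
    _ = M * (∫ p, dist p.1 p.2 ^ 2 ∂π) ^ ((1 : ℝ) / 2)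
          * (∫ p, dist p.1 p.2 ^ 2 ∂π') ^ ((1 : ℝ) / 2) := by ring
end

section
/- Let K₀ > 0, M ≥ 0 and K(r) = K₀ − M/r. Let f : [0,∞) → [0,∞) be C² with f(0)=0 and f'(r) = (1/2)∫_r^∞ s·exp(−(1/2)∫_r^s τK(τ)dτ) ds. Then f is concave, satisfies 2f''(r) − rK(r)f'(r) + r = 0 for all r > 0, and 1/K₀ ≤ f'(r) ≤ f'(0) as well as f(r)/r ≤ f'(0) for all r > 0. -/
open MeasureTheory intervalIntegral

namespace RCaux

open Real Set Filter

lemma int_exp {b : ℝ} (c : ℝ) (hb : 0 < b) :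
    Integrable (fun s : ℝ => Real.exp (-(b * s ^ 2 - c * s))) := by
  have h : (fun s : ℝ => Real.exp (-(b * s ^ 2 - c * s)))
      = fun s => Real.exp (c ^ 2 / (4 * b)) * Real.exp (-b * (s - c / (2 * b)) ^ 2) := by
    funext s
    rw [← Real.exp_add]
    congr 1
    field_simp
    ring
  rw [h]
  exact ((integrable_exp_neg_mul_sq hb).comp_sub_right (c / (2 * b))).const_mul _

lemma int_mul_exp {b : ℝ} (c : ℝ) (hb : 0 < b) :
    Integrable (fun s : ℝ => s * Real.exp (-(b * s ^ 2 - c * s))) := by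
  have h : (fun s : ℝ => s * Real.exp (-(b * s ^ 2 - c * s)))
      = (fun s => Real.exp (c ^ 2 / (4 * b)) *
          ((s - c / (2 * b)) * Real.exp (-b * (s - c / (2 * b)) ^ 2))
          + (c / (2 * b)) * Real.exp (-(b * s ^ 2 - c * s))) := by
    funext s
    have : Real.exp (-(b * s ^ 2 - c * s))
        = Real.exp (c ^ 2 / (4 * b)) * Real.exp (-b * (s - c / (2 * b)) ^ 2) := by
      rw [← Real.exp_add]; congr 1; field_simp; ring
    rw [this]; ring
  rw [h]
  exact ((((integrable_mul_exp_neg_mul_sq hb).comp_sub_right (c / (2 * b))).const_mul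
    _)).add ((int_exp c hb).const_mul _)

lemma tendsto_exp {b : ℝ} (c : ℝ) (hb : 0 < b) :
    Tendsto (fun s : ℝ => Real.exp (-(b * s ^ 2 - c * s))) atTop (nhds 0) := by
  apply Real.tendsto_exp_atBot.comp
  have : Tendsto (fun s : ℝ => b * s ^ 2 - c * s) atTop atTop := by
    have : (fun s : ℝ => b * s ^ 2 - c * s) = fun s => s * (b * s - c) := by
      funext s; ring
    rw [this]
    exact tendsto_id.atTop_mul_atTop₀ (tendsto_atTop_add_const_right _ _
      (tendsto_id.const_mul_atTop hb))
  exact tendsto_neg_atTop_atBot.comp this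

lemma hasDeriv_negexp {b : ℝ} (c : ℝ) (s : ℝ) :
    HasDerivAt (fun s : ℝ => -Real.exp (-(b * s ^ 2 - c * s)))
      ((2 * b * s - c) * Real.exp (-(b * s ^ 2 - c * s))) s := by
  have h1 : HasDerivAt (fun s : ℝ => -(b * s ^ 2 - c * s)) (-(2 * b * s - c)) s := by
    have := ((hasDerivAt_pow 2 s).const_mul b).sub ((hasDerivAt_id s).const_mul c)
    exact this.neg.congr_deriv (by simp; ring)
  have := (h1.exp).neg
  exact this.congr_deriv (by ring)

lemma int_lin_exp {b : ℝ} (c : ℝ) (hb : 0 < b) :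
    Integrable (fun s : ℝ => (2 * b * s - c) * Real.exp (-(b * s ^ 2 - c * s))) := by
  have h : (fun s : ℝ => (2 * b * s - c) * Real.exp (-(b * s ^ 2 - c * s)))
      = fun s => (2 * b) * (s * Real.exp (-(b * s ^ 2 - c * s)))
        - c * Real.exp (-(b * s ^ 2 - c * s)) := by funext s; ring
  rw [h]
  exact ((int_mul_exp c hb).const_mul _).sub ((int_exp c hb).const_mul _)

lemma tail_lin {b : ℝ} (c : ℝ) (hb : 0 < b) (r : ℝ) :
    ∫ s in Ioi r, (2 * b * s - c) * Real.exp (-(b * s ^ 2 - c * s))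
      = Real.exp (-(b * r ^ 2 - c * r)) := by
  have := integral_Ioi_of_hasDerivAt_of_tendsto
    (f := fun s : ℝ => -Real.exp (-(b * s ^ 2 - c * s)))
    (f' := fun s => (2 * b * s - c) * Real.exp (-(b * s ^ 2 - c * s))) (a := r) (m := 0)
    ?_ (fun x _ => hasDeriv_negexp c x) ((int_lin_exp c hb).integrableOn) ?_
  · rw [this]; ring
  · exact ((hasDeriv_negexp c r).continuousAt).continuousWithinAt
  · simpa using (tendsto_exp c hb).neg

lemma tail_mul {b : ℝ} (c : ℝ) (hb : 0 < b) (r : ℝ) :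
    ∫ s in Ioi r, s * Real.exp (-(b * s ^ 2 - c * s))
      = (1 / (2 * b)) * Real.exp (-(b * r ^ 2 - c * r))
        + (c / (2 * b)) * ∫ s in Ioi r, Real.exp (-(b * s ^ 2 - c * s)) := by
  have h : ∀ s : ℝ, s * Real.exp (-(b * s ^ 2 - c * s))
      = (1 / (2 * b)) * ((2 * b * s - c) * Real.exp (-(b * s ^ 2 - c * s)))
        + (c / (2 * b)) * Real.exp (-(b * s ^ 2 - c * s)) := by
    intro s; field_simp; ring
  rw [show (fun s : ℝ => s * Real.exp (-(b * s ^ 2 - c * s))) = _ from funext h]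
  rw [integral_add (((int_lin_exp c hb).integrableOn).const_mul _)
    (((int_exp c hb).integrableOn).const_mul _), MeasureTheory.integral_const_mul, MeasureTheory.integral_const_mul,
    tail_lin c hb r]

lemma mills {b : ℝ} (c : ℝ) (hb : 0 < b) {r : ℝ} (hr : 0 ≤ 2 * b * r - c) :
    (2 * b * r - c) * ∫ s in Ioi r, Real.exp (-(b * s ^ 2 - c * s))
      ≤ Real.exp (-(b * r ^ 2 - c * r)) := by
  have hmono : ∫ s in Ioi r, (2 * b * r - c) * Real.exp (-(b * s ^ 2 - c * s))
      ≤ ∫ s in Ioi r, (2 * b * s - c) * Real.exp (-(b * s ^ 2 - c * s)) := by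
    apply setIntegral_mono_on (((int_exp c hb).integrableOn).const_mul _)
      ((int_lin_exp c hb).integrableOn) measurableSet_Ioi
    intro s hs
    have : 2 * b * r - c ≤ 2 * b * s - c := by
      have := le_of_lt (Set.mem_Ioi.mp hs); nlinarith
    exact mul_le_mul_of_nonneg_right this (Real.exp_pos _).le
  rw [MeasureTheory.integral_const_mul] at hmono
  calc (2 * b * r - c) * ∫ s in Ioi r, Real.exp (-(b * s ^ 2 - c * s))
      ≤ _ := hmono
    _ = _ := tail_lin c hb r

lemma hasDerivAt_tail {ψ : ℝ → ℝ} (hint : Integrable ψ) (hcont : Continuous ψ) (r : ℝ) :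
    HasDerivAt (fun r => ∫ s in Ioi r, ψ s) (-ψ r) r := by
  set a := r - 1 with ha
  have key : ∀ x, a < x → (∫ s in Ioi x, ψ s) = (∫ s in Ioi a, ψ s) - ∫ s in a..x, ψ s := by
    intro x hx
    rw [intervalIntegral.integral_of_le hx.le, eq_sub_iff_add_eq, add_comm,
      ← setIntegral_union (Ioc_disjoint_Ioi le_rfl) measurableSet_Ioi
        hint.integrableOn hint.integrableOn, Ioc_union_Ioi_eq_Ioi hx.le]
  have hd : HasDerivAt (fun x => (∫ s in Ioi a, ψ s) - ∫ s in a..x, ψ s) (-ψ r) r := by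
    have := (intervalIntegral.integral_hasDerivAt_right (a := a) (b := r)
      hint.intervalIntegrable
      (hcont.stronglyMeasurableAtFilter _ _) hcont.continuousAt).const_sub
      (∫ s in Ioi a, ψ s)
    simpa using this
  apply hd.congr_of_eventuallyEq
  filter_upwards [Ioi_mem_nhds (show a < r by simp [ha])] with x hx
  exact key x hx

end RCaux

/-- Properties of the reflection-coupling comparison function `f` associated with
`K(r) = K₀ - M/r`: `f` is concave, solves `2f'' - rK(r)f' + r = 0`, and satisfies
`1/K₀ ≤ f' ≤ f'(0)` and `f(r)/r ≤ f'(0)`. -/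
theorem reflection_coupling_comparison_function_properties
    (K₀ M : ℝ) (hK₀ : 0 < K₀) (hM : 0 ≤ M)
    (f F f'' : ℝ → ℝ)
    (hf0 : f 0 = 0)
    (hfnonneg : ∀ r, 0 ≤ r → 0 ≤ f r)
    (hF : ∀ r, 0 ≤ r → F r =
      (1 / 2) * ∫ s in Set.Ioi r,
        s * Real.exp (-(1 / 2) * ∫ τ in r..s, τ * (K₀ - M / τ)))
    (hf' : ∀ r, 0 ≤ r → HasDerivAt f (F r) r)
    (hf'' : ∀ r, 0 ≤ r → HasDerivAt F (f'' r) r) :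
    ConcaveOn ℝ (Set.Ici 0) f ∧
    (∀ r : ℝ, 0 < r →
      2 * f'' r - r * (K₀ - M / r) * F r + r = 0 ∧
      1 / K₀ ≤ F r ∧ F r ≤ F 0 ∧ f r / r ≤ F 0) := by
  obtain ⟨b, hbdef⟩ : ∃ b : ℝ, b = K₀ / 4 := ⟨_, rfl⟩
  obtain ⟨c, hcdef⟩ : ∃ c : ℝ, c = M / 2 := ⟨_, rfl⟩
  have hb : (0:ℝ) < b := by rw [hbdef]; linarith
  -- the inner interval integral
  have hinner : ∀ r s : ℝ, ∫ τ in r..s, τ * (K₀ - M / τ)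
      = (K₀/2 * s^2 - M*s) - (K₀/2 * r^2 - M*r) := by
    intro r s
    have h0 : ∀ᵐ x : ℝ, x ≠ 0 := by
      refine MeasureTheory.ae_iff.2 ?_
      have : {x : ℝ | ¬ x ≠ 0} = {0} := by ext; simp
      rw [this]; exact Real.volume_singleton
    have hcongr : ∫ τ in r..s, τ * (K₀ - M / τ) = ∫ τ in r..s, (K₀ * τ - M) := by
      apply intervalIntegral.integral_congr_ae
      filter_upwards [h0] with x hx _
      field_simp
    rw [hcongr]
    have hderiv : ∀ τ : ℝ, HasDerivAt (fun τ => K₀/2 * τ^2 - M*τ) (K₀ * τ - M) τ := by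
      intro τ
      have := ((hasDerivAt_pow 2 τ).const_mul (K₀/2)).sub ((hasDerivAt_id τ).const_mul M)
      exact this.congr_deriv (by ring)
    rw [intervalIntegral.integral_eq_sub_of_hasDerivAt (fun τ _ => hderiv τ)
      ((Continuous.intervalIntegrable (by fun_prop) _ _))]
  -- notation for the tail integrals
  set g : ℝ → ℝ := fun r => ∫ s in Set.Ioi r, s * Real.exp (-(b * s ^ 2 - c * s)) with hgdef
  set H : ℝ → ℝ := fun r => ∫ s in Set.Ioi r, Real.exp (-(b * s ^ 2 - c * s)) with hHdef
  -- closed form for F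
  have hFg : ∀ r : ℝ, 0 ≤ r → F r = (1/2) * (Real.exp (b * r ^ 2 - c * r) * g r) := by
    intro r hr
    rw [hF r hr]
    have heq : ∀ s : ℝ, s * Real.exp (-(1 / 2) * ∫ τ in r..s, τ * (K₀ - M / τ))
        = Real.exp (b * r ^ 2 - c * r) * (s * Real.exp (-(b * s ^ 2 - c * s))) := by
      intro s
      rw [hinner r s]
      rw [show (-(1/2) * ((K₀/2 * s^2 - M*s) - (K₀/2 * r^2 - M*r)))
          = (b * r ^ 2 - c * r) + (-(b * s ^ 2 - c * s)) by rw [hbdef, hcdef]; ring]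
      rw [Real.exp_add]
      ring
    simp only [heq]
    rw [MeasureTheory.integral_const_mul]
  -- exp(φ r) * exp (-φ r) = 1
  have hee : ∀ r : ℝ, Real.exp (b * r ^ 2 - c * r) * Real.exp (-(b * r ^ 2 - c * r)) = 1 := by
    intro r; rw [← Real.exp_add]; simp
  -- closed form via the tail identity
  have hFH : ∀ r : ℝ, 0 ≤ r →
      F r = 1/K₀ + M/(2*K₀) * (Real.exp (b * r ^ 2 - c * r) * H r) := by
    intro r hr
    rw [hFg r hr]
    have ht : g r = (1 / (2*b)) * Real.exp (-(b * r ^ 2 - c * r)) + (c / (2*b)) * H r :=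
      RCaux.tail_mul c hb r
    rw [ht]
    have h1 := hee r
    have h2 : (1/2:ℝ) * (Real.exp (b * r ^ 2 - c * r) *
        ((1 / (2*b)) * Real.exp (-(b * r ^ 2 - c * r)) + (c / (2*b)) * H r))
        = (1/K₀) * (Real.exp (b * r ^ 2 - c * r) * Real.exp (-(b * r ^ 2 - c * r)))
          + M/(2*K₀) * (Real.exp (b * r ^ 2 - c * r) * H r) := by
      rw [hbdef, hcdef]
      have hK : K₀ ≠ 0 := ne_of_gt hK₀
      field_simp
      ring
    rw [h2, h1, mul_one]
  have hHnonneg : ∀ r : ℝ, 0 ≤ H r := fun r =>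
    MeasureTheory.setIntegral_nonneg measurableSet_Ioi (fun x _ => (Real.exp_pos _).le)
  -- derivative of the closed form
  have hg' : ∀ r : ℝ, HasDerivAt g (-(r * Real.exp (-(b * r ^ 2 - c * r)))) r := by
    intro r
    exact RCaux.hasDerivAt_tail (RCaux.int_mul_exp c hb) (by fun_prop) r
  have hexp' : ∀ r : ℝ, HasDerivAt (fun r : ℝ => Real.exp (b * r ^ 2 - c * r))
      ((2*b*r - c) * Real.exp (b * r ^ 2 - c * r)) r := by
    intro r
    have h1 : HasDerivAt (fun r : ℝ => b * r ^ 2 - c * r) (2*b*r - c) r := by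
      have := ((hasDerivAt_pow 2 r).const_mul b).sub ((hasDerivAt_id r).const_mul c)
      exact this.congr_deriv (by ring)
    have := h1.exp
    convert this using 1; ring
  have hf''eq : ∀ r : ℝ, 0 < r → f'' r = (2*b*r - c) * F r - r/2 := by
    intro r hr
    have hGd : HasDerivAt (fun x => (1/2) * (Real.exp (b * x ^ 2 - c * x) * g x))
        ((2*b*r - c) * ((1/2) * (Real.exp (b * r ^ 2 - c * r) * g r)) - r/2) r := by
      have := ((hexp' r).mul (hg' r)).const_mul (1/2 : ℝ)
      exact this.congr_deriv (by linear_combination -(r/2) * hee r)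
    have hFev : F =ᶠ[nhds r] (fun x => (1/2) * (Real.exp (b * x ^ 2 - c * x) * g x)) := by
      filter_upwards [Ioi_mem_nhds hr] with x hx
      exact hFg x (le_of_lt hx)
    have hFd : HasDerivAt F
        ((2*b*r - c) * ((1/2) * (Real.exp (b * r ^ 2 - c * r) * g r)) - r/2) r :=
      hGd.congr_of_eventuallyEq hFev
    have := (hf'' r hr.le).unique hFd
    rw [this, ← hFg r hr.le]
  -- f'' ≤ 0 on (0, ∞)
  have hf''le : ∀ r : ℝ, 0 < r → f'' r ≤ 0 := by
    intro r hr
    rw [hf''eq r hr, hFH r hr.le]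
    have hE := Real.exp_pos (b * r ^ 2 - c * r)
    have hE' := Real.exp_pos (-(b * r ^ 2 - c * r))
    have hH := hHnonneg r
    have h1 := hee r
    rcases le_or_gt (2*b*r - c) 0 with h | h
    · have hnn : (0:ℝ) ≤ 1/K₀ + M/(2*K₀) * (Real.exp (b * r ^ 2 - c * r) * H r) := by
        have h3 : 0 ≤ M/(2*K₀) * (Real.exp (b * r ^ 2 - c * r) * H r) := by positivity
        have h4 : (0:ℝ) < 1/K₀ := by positivity
        linarith
      nlinarith [mul_nonneg (neg_nonneg.2 h) hnn]
    · have hmills := RCaux.mills c hb (le_of_lt h)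
      have hMK : 0 ≤ M/(2*K₀) := by positivity
      have key : (2*b*r - c) * (Real.exp (b * r ^ 2 - c * r) * H r) ≤ 1 := by
        have h5 := mul_le_mul_of_nonneg_left hmills (Real.exp_pos (b * r ^ 2 - c * r)).le
        nlinarith [h5]
      have expand : (2*b*r - c) * (1/K₀ + M/(2*K₀) * (Real.exp (b * r ^ 2 - c * r) * H r)) - r/2
          = M/(2*K₀) * ((2*b*r - c) * (Real.exp (b * r ^ 2 - c * r) * H r) - 1) := by
        rw [hbdef, hcdef]
        have hK : K₀ ≠ 0 := ne_of_gt hK₀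
        field_simp
        ring
      rw [expand]
      nlinarith
  -- F is antitone on [0, ∞)
  have hFcont : ContinuousOn F (Set.Ici 0) :=
    fun x hx => ((hf'' x hx).continuousAt).continuousWithinAt
  have hFanti : AntitoneOn F (Set.Ici 0) := by
    apply antitoneOn_of_deriv_nonpos (convex_Ici 0) hFcont
    · intro x hx
      rw [interior_Ici] at hx
      exact ((hf'' x (le_of_lt hx)).differentiableAt).differentiableWithinAt
    · intro x hx
      rw [interior_Ici] at hx
      rw [(hf'' x (le_of_lt hx)).deriv]
      exact hf''le x hx
  -- concavity of f
  have hconc : ConcaveOn ℝ (Set.Ici 0) f := by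
    apply AntitoneOn.concaveOn_of_deriv (convex_Ici 0)
      (fun x hx => (hf' x hx).continuousAt.continuousWithinAt)
      (fun x hx => by
        rw [interior_Ici] at hx
        exact ((hf' x (le_of_lt hx)).differentiableAt).differentiableWithinAt)
    intro x hx y hy hxy
    rw [interior_Ici] at hx hy
    rw [(hf' x (le_of_lt hx)).deriv, (hf' y (le_of_lt hy)).deriv]
    exact hFanti (Set.mem_Ici.2 (le_of_lt hx)) (Set.mem_Ici.2 (le_of_lt hy)) hxy
  refine ⟨hconc, fun r hr => ?_⟩
  have hr' : (0:ℝ) ≤ r := hr.le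
  constructor
  · -- the ODE
    rw [hf''eq r hr]
    have hrne : r ≠ 0 := ne_of_gt hr
    have : r * (K₀ - M / r) = 2*(2*b*r - c) := by
      rw [hbdef, hcdef]; field_simp; ring
    rw [this]; ring
  refine ⟨?_, ?_, ?_⟩
  · -- lower bound
    rw [hFH r hr']
    have : 0 ≤ M/(2*K₀) * (Real.exp (b * r ^ 2 - c * r) * H r) := by
      have := hHnonneg r; positivity
    linarith
  · -- upper bound by F 0
    exact hFanti (le_refl (0:ℝ)) hr' hr'
  · -- f r / r ≤ F 0
    rw [div_le_iff₀ hr]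
    have hmono : MonotoneOn (fun x => F 0 * x - f x) (Set.Icc 0 r) := by
      apply monotoneOn_of_deriv_nonneg (convex_Icc 0 r)
      · exact ((continuous_const.mul continuous_id).continuousOn).sub
          ((fun x hx => (hf' x hx.1).continuousAt.continuousWithinAt))
      · intro x hx
        rw [interior_Icc] at hx
        have hd : HasDerivAt (fun x => F 0 * x - f x) (F 0 - F x) x := by
          exact (((hasDerivAt_id x).const_mul (F 0)).sub (hf' x hx.1.le)).congr_deriv (by simp)
        exact hd.differentiableAt.differentiableWithinAt
      · intro x hx
        rw [interior_Icc] at hx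
        have hd : HasDerivAt (fun x => F 0 * x - f x) (F 0 - F x) x := by
          exact (((hasDerivAt_id x).const_mul (F 0)).sub (hf' x hx.1.le)).congr_deriv (by simp)
        rw [hd.deriv]
        have : F x ≤ F 0 := hFanti (le_refl (0:ℝ)) hx.1.le hx.1.le
        linarith
    have := hmono (Set.left_mem_Icc.2 hr') (Set.right_mem_Icc.2 hr') hr'
    simp only [hf0, mul_zero, sub_zero] at this
    linarith [this]
end

section
/- Let V(y,x) = ∇Φ(y)·ℓ(x) with Φ : ℝ^D → ℝ a C² function satisfying sup_{x,y}|∇²Φ(y)^{1/2}∇ℓ(x)|² ≤ M₂, and let y_* ∈ ℝ^D. Then for any y ∈ ℝ^D and any two probability measures m, m' on ℝ^d with finite first moments, |∫(V(y,x) − V(y_*,x))(m − m')(dx)| ≤ √(M₂) · (∫₀¹ (y−y_*)^T ∇²Φ((1−t)y + t y_*) (y−y_*) dt)^{1/2} · W₁(m,m'), provided Φ is convex (so ∇²Φ ⪰ 0). -/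
open MeasureTheory

/-- 1-Wasserstein distance via couplings. -/
noncomputable def W1 {E : Type*} [MeasurableSpace E] [PseudoMetricSpace E]
    (μ ν : Measure E) : ℝ :=
  sInf {r | ∃ π : Measure (E × E), π.fst = μ ∧ π.snd = ν ∧
    r = ∫ p, dist p.1 p.2 ∂π}

/-- For a probability measure, `(∫ g)² ≤ ∫ g²`. -/
lemma sq_integral_le_aux {α : Type*} [MeasurableSpace α] (μ : Measure α)
    [IsProbabilityMeasure μ] (g : α → ℝ) (hg : Integrable g μ)
    (hg2 : Integrable (fun a => g a ^ 2) μ) :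
    (∫ a, g a ∂μ) ^ 2 ≤ ∫ a, g a ^ 2 ∂μ := by
  set c := ∫ a, g a ∂μ with hc
  have h0 : 0 ≤ ∫ a, (g a - c) ^ 2 ∂μ := integral_nonneg fun a => sq_nonneg _
  have h1 : ∀ a, (g a - c) ^ 2 = g a ^ 2 - (2 * c) * g a + c ^ 2 := fun a => by ring
  have e1 : Integrable (fun a => g a ^ 2 - 2 * c * g a) μ := hg2.sub (hg.const_mul _)
  have e2 : Integrable (fun a => (2 * c) * g a) μ := hg.const_mul _
  have hexp : ∫ a, (g a - c) ^ 2 ∂μ = (∫ a, g a ^ 2 ∂μ) - c ^ 2 := by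
    calc ∫ a, (g a - c) ^ 2 ∂μ
        = ∫ a, (g a ^ 2 - 2 * c * g a) + c ^ 2 ∂μ := by simp_rw [h1]
      _ = (∫ a, g a ^ 2 - 2 * c * g a ∂μ) + ∫ _a, (c ^ 2 : ℝ) ∂μ :=
          integral_add e1 (integrable_const _)
      _ = ((∫ a, g a ^ 2 ∂μ) - ∫ a, (2 * c) * g a ∂μ) + ∫ _a, (c ^ 2 : ℝ) ∂μ := by
          rw [integral_sub hg2 e2]
      _ = (∫ a, g a ^ 2 ∂μ) - c ^ 2 := by
          rw [integral_const_mul, integral_const]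
          simp [← hc]
          ring
  linarith

/-- For `V(y,x) = ∇Φ(y)·ℓ(x)` with convex `C²` `Φ` whose Hessian square roots `S(w)`
satisfy `‖S(w)∇ℓ(x)‖ ≤ √M₂`, one has
`|∫ (V(y,·) - V(y_*,·)) d(m - m')| ≤ √M₂ (∫₀¹ (y-y_*)ᵀ∇²Φ((1-t)y+ty_*)(y-y_*) dt)^{1/2} W₁(m,m')`. -/
theorem potential_difference_w1_bound {d D : ℕ}
    (Φ : EuclideanSpace ℝ (Fin D) → ℝ)
    (hΦ : ContDiff ℝ 2 Φ)
    (hconv : ConvexOn ℝ Set.univ Φ)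
    (ℓ : EuclideanSpace ℝ (Fin d) → EuclideanSpace ℝ (Fin D))
    (hℓdiff : Differentiable ℝ ℓ)
    (M₂ : ℝ) (hM₂ : 0 ≤ M₂)
    -- `S w` is the positive semidefinite square root of the Hessian `∇²Φ(w)`
    (S : EuclideanSpace ℝ (Fin D) → EuclideanSpace ℝ (Fin D) →L[ℝ] EuclideanSpace ℝ (Fin D))
    (hSsym : ∀ w (u v : EuclideanSpace ℝ (Fin D)),
      (inner ℝ (S w u) v : ℝ) = inner ℝ u (S w v))
    (hSsq : ∀ w : EuclideanSpace ℝ (Fin D), (S w).comp (S w) = fderiv ℝ (gradient Φ) w)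
    (hop : ∀ w x, ‖(S w).comp (fderiv ℝ ℓ x)‖ ^ 2 ≤ M₂)
    (V : EuclideanSpace ℝ (Fin D) → EuclideanSpace ℝ (Fin d) → ℝ)
    (hV : ∀ y x, V y x = (inner ℝ (gradient Φ y) (ℓ x) : ℝ))
    (y ystar : EuclideanSpace ℝ (Fin D))
    (m m' : Measure (EuclideanSpace ℝ (Fin d)))
    [IsProbabilityMeasure m] [IsProbabilityMeasure m']
    (hmom : Integrable (fun x : EuclideanSpace ℝ (Fin d) => ‖x‖) m)
    (hmom' : Integrable (fun x : EuclideanSpace ℝ (Fin d) => ‖x‖) m')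
    (hint : Integrable ℓ m) (hint' : Integrable ℓ m') :
    |(∫ x, (V y x - V ystar x) ∂m) - ∫ x, (V y x - V ystar x) ∂m'| ≤
      Real.sqrt M₂ *
        Real.sqrt (∫ t in (0 : ℝ)..1,
          (inner ℝ (fderiv ℝ (gradient Φ) ((1 - t) • y + t • ystar) (y - ystar))
            (y - ystar) : ℝ)) *
        W1 m m' := by
  classical
  set u : EuclideanSpace ℝ (Fin D) := y - ystar with hu
  set γ : ℝ → EuclideanSpace ℝ (Fin D) := fun t => (1 - t) • y + t • ystar with hγdef
  set g : EuclideanSpace ℝ (Fin D) := gradient Φ y - gradient Φ ystar with hg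
  set f : EuclideanSpace ℝ (Fin d) → ℝ := fun x => (inner ℝ g (ℓ x) : ℝ) with hf
  have hVf : ∀ x, V y x - V ystar x = f x := by
    intro x; rw [hV, hV, hf]; simp [hg, inner_sub_left]
  -- smoothness of the gradient
  have hgradC1 : ContDiff ℝ 1 (gradient Φ) := by
    have h1 : ContDiff ℝ 1 (fderiv ℝ Φ) := hΦ.fderiv_right (by norm_num)
    exact ((InnerProductSpace.toDual ℝ _).symm.contDiff).comp h1
  have hgraddiff : Differentiable ℝ (gradient Φ) := hgradC1.differentiable one_ne_zero
  have hγcont : Continuous γ := by fun_prop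
  have hHcont : Continuous (fun w => fderiv ℝ (gradient Φ) w) :=
    hgradC1.continuous_fderiv one_ne_zero
  have hγ0 : γ 0 = y := by simp [hγdef]
  have hγ1 : γ 1 = ystar := by simp [hγdef]
  have hγderiv : ∀ t : ℝ, HasDerivAt γ (ystar - y) t := by
    intro t
    have h2 : HasDerivAt (fun s : ℝ => y + s • (ystar - y)) (ystar - y) t := by
      simpa using ((hasDerivAt_id t).smul_const (ystar - y)).const_add y
    have hfun : γ = fun s : ℝ => y + s • (ystar - y) := by
      funext s; simp only [hγdef]; module
    rw [hfun]; exact h2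
  -- FTC along the segment
  have hftc : ∀ w : EuclideanSpace ℝ (Fin D),
      (inner ℝ g w : ℝ)
        = ∫ t in (0:ℝ)..1, (inner ℝ (fderiv ℝ (gradient Φ) (γ t) u) w : ℝ) := by
    intro w
    have hd : ∀ t : ℝ, HasDerivAt (fun s => (inner ℝ (gradient Φ (γ s)) w : ℝ))
        ((inner ℝ (fderiv ℝ (gradient Φ) (γ t) (ystar - y)) w : ℝ)) t := by
      intro t
      have h1 : HasDerivAt (fun s => gradient Φ (γ s))
          (fderiv ℝ (gradient Φ) (γ t) (ystar - y)) t :=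
        (hgraddiff (γ t)).hasFDerivAt.comp_hasDerivAt t (hγderiv t)
      simpa using h1.inner ℝ (hasDerivAt_const t w)
    have hcont : Continuous
        (fun t => (inner ℝ (fderiv ℝ (gradient Φ) (γ t) (ystar - y)) w : ℝ)) :=
      Continuous.inner ((hHcont.comp hγcont).clm_apply continuous_const) continuous_const
    have hint0 := intervalIntegral.integral_eq_sub_of_hasDerivAt
      (f := fun s => (inner ℝ (gradient Φ (γ s)) w : ℝ)) (fun t _ => hd t)
      (hcont.intervalIntegrable 0 1)
    simp only [hγ1, hγ0] at hint0
    have hneg : ∀ t : ℝ, (inner ℝ (fderiv ℝ (gradient Φ) (γ t) u) w : ℝ)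
        = -(inner ℝ (fderiv ℝ (gradient Φ) (γ t) (ystar - y)) w : ℝ) := by
      intro t
      have h3 : u = -(ystar - y) := by rw [hu]; abel
      rw [h3, map_neg, inner_neg_left]
    simp_rw [hneg]
    rw [intervalIntegral.integral_neg, hint0]
    simp [hg, inner_sub_left]
  -- the scalar function along the segment
  set q : ℝ → ℝ := fun t => ‖S (γ t) u‖ with hq
  have hq2 : ∀ t : ℝ, q t ^ 2 = (inner ℝ (fderiv ℝ (gradient Φ) (γ t) u) u : ℝ) := by
    intro t
    rw [← hSsq (γ t), ContinuousLinearMap.comp_apply, hSsym (γ t) (S (γ t) u) u,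
      real_inner_self_eq_norm_sq]
  have hqcont : Continuous q := by
    have hqeq : q = fun t => Real.sqrt ((inner ℝ (fderiv ℝ (gradient Φ) (γ t) u) u : ℝ)) := by
      funext t; rw [← hq2 t, Real.sqrt_sq (norm_nonneg _)]
    rw [hqeq]
    exact Real.continuous_sqrt.comp
      (Continuous.inner ((hHcont.comp hγcont).clm_apply continuous_const) continuous_const)
  set K : ℝ := ∫ t in (0:ℝ)..1, (inner ℝ (fderiv ℝ (gradient Φ) (γ t) u) u : ℝ) with hK
  have hKq : K = ∫ t in (0:ℝ)..1, q t ^ 2 := by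
    rw [hK]; exact intervalIntegral.integral_congr fun t _ => (hq2 t).symm
  have hK0 : 0 ≤ K := by
    rw [hKq]
    exact intervalIntegral.integral_nonneg zero_le_one fun t _ => sq_nonneg _
  have hA : ∫ t in (0:ℝ)..1, q t ≤ Real.sqrt K := by
    have hA0 : 0 ≤ ∫ t in (0:ℝ)..1, q t :=
      intervalIntegral.integral_nonneg zero_le_one fun t _ => norm_nonneg _
    rw [Real.le_sqrt hA0 hK0]
    haveI hprob : IsProbabilityMeasure (volume.restrict (Set.Ioc (0:ℝ) 1)) :=
      ⟨by simp⟩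
    have hintq : Integrable q (volume.restrict (Set.Ioc (0:ℝ) 1)) :=
      (hqcont.integrableOn_Ioc : IntegrableOn q (Set.Ioc 0 1) volume)
    have hintq2 : Integrable (fun t => q t ^ 2) (volume.restrict (Set.Ioc (0:ℝ) 1)) :=
      ((hqcont.pow 2).integrableOn_Ioc : IntegrableOn (fun t => q t ^ 2) (Set.Ioc 0 1) volume)
    have := sq_integral_le_aux (volume.restrict (Set.Ioc (0:ℝ) 1)) q hintq hintq2
    rw [hKq, intervalIntegral.integral_of_le zero_le_one,
      intervalIntegral.integral_of_le zero_le_one]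
    exact this
  set C : ℝ := Real.sqrt M₂ * Real.sqrt K with hC
  have hC0 : 0 ≤ C := mul_nonneg (Real.sqrt_nonneg _) (Real.sqrt_nonneg _)
  -- Lipschitz bound for f
  have hlip : ∀ x x', |f x - f x'| ≤ C * dist x x' := by
    intro x x'
    have h1 : f x - f x' = (inner ℝ g (ℓ x - ℓ x') : ℝ) := by
      rw [hf]; simp [inner_sub_right]
    rw [h1, hftc (ℓ x - ℓ x')]
    set w := ℓ x - ℓ x' with hw
    have hSw : ‖S (γ 0) w‖ = ‖S (γ 0) w‖ := rfl
    have hpt : ∀ t : ℝ, |(inner ℝ (fderiv ℝ (gradient Φ) (γ t) u) w : ℝ)|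
        ≤ q t * (Real.sqrt M₂ * dist x x') := by
      intro t
      have e1 : (inner ℝ (fderiv ℝ (gradient Φ) (γ t) u) w : ℝ)
          = inner ℝ (S (γ t) u) (S (γ t) w) := by
        rw [← hSsq (γ t), ContinuousLinearMap.comp_apply, hSsym (γ t) (S (γ t) u) w]
      have e2 : ‖S (γ t) w‖ ≤ Real.sqrt M₂ * dist x x' := by
        have hdiff : ∀ z, DifferentiableAt ℝ (fun z => S (γ t) (ℓ z)) z := fun z =>
          ((S (γ t)).differentiable.differentiableAt).comp z (hℓdiff z)
        have hfd : ∀ z, fderiv ℝ (fun z => S (γ t) (ℓ z)) z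
            = (S (γ t)).comp (fderiv ℝ ℓ z) := by
          intro z
          have h5 : HasFDerivAt (fun z => S (γ t) (ℓ z))
              ((S (γ t)).comp (fderiv ℝ ℓ z)) z :=
            ((S (γ t)).hasFDerivAt).comp z (hℓdiff z).hasFDerivAt
          exact h5.fderiv
        have hb : ∀ z ∈ (Set.univ : Set (EuclideanSpace ℝ (Fin d))),
            ‖fderiv ℝ (fun z => S (γ t) (ℓ z)) z‖ ≤ Real.sqrt M₂ := by
          intro z _
          rw [hfd z, Real.le_sqrt (norm_nonneg _) hM₂]
          exact hop (γ t) z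
        have hmvt := convex_univ.norm_image_sub_le_of_norm_fderiv_le
          (fun z _ => hdiff z) hb (Set.mem_univ x') (Set.mem_univ x)
        rw [dist_eq_norm]
        calc ‖S (γ t) w‖ = ‖S (γ t) (ℓ x) - S (γ t) (ℓ x')‖ := by rw [hw, map_sub]
          _ ≤ Real.sqrt M₂ * ‖x - x'‖ := hmvt
      calc |(inner ℝ (fderiv ℝ (gradient Φ) (γ t) u) w : ℝ)|
          = |(inner ℝ (S (γ t) u) (S (γ t) w) : ℝ)| := by rw [e1]
        _ ≤ ‖S (γ t) u‖ * ‖S (γ t) w‖ := abs_real_inner_le_norm _ _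
        _ ≤ q t * (Real.sqrt M₂ * dist x x') :=
            mul_le_mul_of_nonneg_left e2 (norm_nonneg _)
    have hcont1 : Continuous (fun t => (inner ℝ (fderiv ℝ (gradient Φ) (γ t) u) w : ℝ)) :=
      Continuous.inner ((hHcont.comp hγcont).clm_apply continuous_const) continuous_const
    calc |∫ t in (0:ℝ)..1, (inner ℝ (fderiv ℝ (gradient Φ) (γ t) u) w : ℝ)|
        ≤ ∫ t in (0:ℝ)..1, |(inner ℝ (fderiv ℝ (gradient Φ) (γ t) u) w : ℝ)| :=
          intervalIntegral.abs_integral_le_integral_abs zero_le_one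
      _ ≤ ∫ t in (0:ℝ)..1, q t * (Real.sqrt M₂ * dist x x') := by
          apply intervalIntegral.integral_mono_on zero_le_one
            (hcont1.abs.intervalIntegrable 0 1)
            ((hqcont.mul continuous_const).intervalIntegrable 0 1)
            (fun t _ => hpt t)
      _ = (∫ t in (0:ℝ)..1, q t) * (Real.sqrt M₂ * dist x x') := by
          rw [intervalIntegral.integral_mul_const]
      _ ≤ Real.sqrt K * (Real.sqrt M₂ * dist x x') :=
          mul_le_mul_of_nonneg_right hA (mul_nonneg (Real.sqrt_nonneg _) dist_nonneg)
      _ = C * dist x x' := by rw [hC]; ring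
  -- measure-theoretic part
  simp_rw [hVf]
  have hfcont : Continuous f := Continuous.inner continuous_const hℓdiff.continuous
  have key : ∀ r ∈ {r | ∃ π : Measure (EuclideanSpace ℝ (Fin d) × EuclideanSpace ℝ (Fin d)),
      π.fst = m ∧ π.snd = m' ∧ r = ∫ p, dist p.1 p.2 ∂π},
      |(∫ x, f x ∂m) - ∫ x, f x ∂m'| ≤ C * r := by
    rintro r ⟨π, hπ1, hπ2, rfl⟩
    haveI : IsProbabilityMeasure π := ⟨by rw [← Measure.fst_univ, hπ1]; exact measure_univ⟩
    have hπm : m = π.map Prod.fst := by rw [← hπ1]; rfl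
    have hπm' : m' = π.map Prod.snd := by rw [← hπ2]; rfl
    have hfm : Integrable f m := by
      have := (innerSL ℝ g).integrable_comp hint
      simpa [hf] using this
    have hfm' : Integrable f m' := by
      have := (innerSL ℝ g).integrable_comp hint'
      simpa [hf] using this
    have h1 : ∫ x, f x ∂m = ∫ p, f p.1 ∂π := by
      rw [hπm]; exact integral_map measurable_fst.aemeasurable hfcont.aestronglyMeasurable
    have h2 : ∫ x, f x ∂m' = ∫ p, f p.2 ∂π := by
      rw [hπm']; exact integral_map measurable_snd.aemeasurable hfcont.aestronglyMeasurable
    have hif1 : Integrable (fun p : _ × _ => f p.1) π := by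
      rw [hπm] at hfm
      exact (integrable_map_measure hfcont.aestronglyMeasurable
        measurable_fst.aemeasurable).1 hfm
    have hif2 : Integrable (fun p : _ × _ => f p.2) π := by
      rw [hπm'] at hfm'
      exact (integrable_map_measure hfcont.aestronglyMeasurable
        measurable_snd.aemeasurable).1 hfm'
    have hn1 : Integrable (fun p : EuclideanSpace ℝ (Fin d) × EuclideanSpace ℝ (Fin d)
        => ‖p.1‖) π := by
      rw [hπm] at hmom
      exact (integrable_map_measure continuous_norm.aestronglyMeasurable
        measurable_fst.aemeasurable).1 hmom
    have hn2 : Integrable (fun p : EuclideanSpace ℝ (Fin d) × EuclideanSpace ℝ (Fin d)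
        => ‖p.2‖) π := by
      rw [hπm'] at hmom'
      exact (integrable_map_measure continuous_norm.aestronglyMeasurable
        measurable_snd.aemeasurable).1 hmom'
    have hdistint : Integrable (fun p : EuclideanSpace ℝ (Fin d) ×
        EuclideanSpace ℝ (Fin d) => dist p.1 p.2) π := by
      apply (hn1.add hn2).mono (continuous_fst.dist continuous_snd).aestronglyMeasurable
      filter_upwards with p
      calc ‖dist p.1 p.2‖ = dist p.1 p.2 := Real.norm_of_nonneg dist_nonneg
        _ ≤ ‖p.1‖ + ‖p.2‖ := by rw [dist_eq_norm]; exact norm_sub_le _ _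
        _ ≤ ‖‖p.1‖ + ‖p.2‖‖ := le_abs_self _
    calc |(∫ x, f x ∂m) - ∫ x, f x ∂m'|
        = |∫ p, (f p.1 - f p.2) ∂π| := by rw [h1, h2, integral_sub hif1 hif2]
      _ ≤ ∫ p, |f p.1 - f p.2| ∂π := by
          simpa [Real.norm_eq_abs] using
            norm_integral_le_integral_norm (fun p : _ × _ => f p.1 - f p.2) (μ := π)
      _ ≤ ∫ p, C * dist p.1 p.2 ∂π := by
          apply integral_mono (hif1.sub hif2).abs (hdistint.const_mul C)
          exact fun p => hlip p.1 p.2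
      _ = C * ∫ p, dist p.1 p.2 ∂π := integral_const_mul _ _
  -- conclude via infimum
  have hne : Set.Nonempty {r | ∃ π : Measure (EuclideanSpace ℝ (Fin d) ×
      EuclideanSpace ℝ (Fin d)), π.fst = m ∧ π.snd = m' ∧ r = ∫ p, dist p.1 p.2 ∂π} :=
    ⟨∫ p, dist p.1 p.2 ∂(m.prod m'), m.prod m', Measure.fst_prod, Measure.snd_prod, rfl⟩
  rw [show Real.sqrt M₂ * Real.sqrt K * W1 m m' = C * W1 m m' by rw [hC]]
  rcases eq_or_lt_of_le hC0 with hCeq | hCpos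
  · obtain ⟨r₀, hr₀⟩ := hne
    have := key r₀ hr₀
    rw [← hCeq] at this ⊢
    simpa using this
  · have hdiv : |(∫ x, f x ∂m) - ∫ x, f x ∂m'| / C ≤ W1 m m' := by
      apply le_csInf hne
      intro r hr
      rw [div_le_iff₀ hCpos]
      calc |(∫ x, f x ∂m) - ∫ x, f x ∂m'| ≤ C * r := key r hr
        _ = r * C := mul_comm _ _
    calc |(∫ x, f x ∂m) - ∫ x, f x ∂m'|
        = (|(∫ x, f x ∂m) - ∫ x, f x ∂m'| / C) * C := by field_simp
      _ ≤ W1 m m' * C := mul_le_mul_of_nonneg_right hdiv hC0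
      _ = C * W1 m m' := mul_comm _ _
end
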